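/- Let G₁, G₂ be graphs and K an edge-transitive graph. Then there is a cycle-continuous mapping from the 2-join G₁≡₂G₂ to K if and only if there are cycle-continuous mappings G₁ → K and G₂ → K. -/

import Mathlib

/-- A finite multigraph: a vertex type, an edge type, and two (arbitrarily ordered)
endpoints for each edge.  Loops (`fst e = snd e`) and parallel edges are allowed. -/
structure Multigraph where
  V : Type
  E : Type
  fst : E → V
  snd : E → V
  [fintypeV : Fintype V]
  [fintypeE : Fintype E]
  [decEqV : DecidableEq V]
  [decEqE : DecidableEq E]

attribute [instance] Multigraph.fintypeV Multigraph.fintypeE Multigraph.decEqV Multigraph.decEqE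

namespace Multigraph

/-- The number of times edge `e` is incident with vertex `v` (a loop counts twice). -/
def inc (G : Multigraph) (v : G.V) (e : G.E) : ℕ :=
  (if G.fst e = v then 1 else 0) + (if G.snd e = v then 1 else 0)

/-- A set of edges is a *cycle* if every vertex is incident with an even number of
its edges (loops counted twice). -/
def IsCycle (G : Multigraph) (C : Finset G.E) : Prop :=
  ∀ v : G.V, Even (∑ e ∈ C, G.inc v e)

/-- The preimage of a finite set of edges under a mapping. -/
def preim {α β : Type} [Fintype α] [DecidableEq β] (f : α → β) (C : Finset β) : Finset α :=
  Finset.univ.filter (fun e => f e ∈ C)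

/-- A mapping `f : E(G) → E(H)` is *cycle-continuous* if the preimage of every
cycle of `H` is a cycle of `G`. -/
def CycleContinuous (G H : Multigraph) (f : G.E → H.E) : Prop :=
  ∀ C : Finset H.E, H.IsCycle C → G.IsCycle (preim f C)

/-- The cut `δ(U)`: edges with exactly one endpoint in `U`. -/
def cutOf (G : Multigraph) (U : Finset G.V) : Finset G.E :=
  Finset.univ.filter (fun e => Xor (G.fst e ∈ U) (G.snd e ∈ U))

/-- A set of edges is a *cut* if it equals `δ(U)` for some vertex set `U`. -/
def IsCut (G : Multigraph) (C : Finset G.E) : Prop :=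
  ∃ U : Finset G.V, C = G.cutOf U

/-- The set of edges incident with a vertex `v`. -/
def incidentEdges (G : Multigraph) (v : G.V) : Finset G.E :=
  Finset.univ.filter (fun e => G.fst e = v ∨ G.snd e = v)

/-- The degree of a vertex (loops counted twice). -/
def degree (G : Multigraph) (v : G.V) : ℕ := ∑ e : G.E, G.inc v e

def Cubic (G : Multigraph) : Prop := ∀ v : G.V, G.degree v = 3

/-- A graph is bridgeless if no cut consists of exactly one edge. -/
def Bridgeless (G : Multigraph) : Prop := ∀ C : Finset G.E, G.IsCut C → C.card ≠ 1

/-- A graph is connected if it has a vertex and every nontrivial vertex set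
has a nonempty cut. -/
def Connected (G : Multigraph) : Prop :=
  Nonempty G.V ∧ ∀ U : Finset G.V, U ≠ ∅ → U ≠ Finset.univ → G.cutOf U ≠ ∅

/-- `K₂³`: the graph with two vertices joined by three parallel edges. -/
def K23 : Multigraph where
  V := Bool
  E := Fin 3
  fst := fun _ => false
  snd := fun _ => true

/-- A snark: a connected cubic bridgeless graph with no cycle-continuous mapping to `K₂³`. -/
def IsSnark (G : Multigraph) : Prop :=
  G.Cubic ∧ G.Connected ∧ G.Bridgeless ∧ ¬ ∃ f : G.E → K23.E, CycleContinuous G K23 f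

/-- A proper 3-edge-coloring: distinct edges sharing a vertex get distinct colors. -/
def Proper3EdgeColorable (G : Multigraph) : Prop :=
  ∃ c : G.E → Fin 3, ∀ e e' : G.E, e ≠ e' →
    (∃ v : G.V, 0 < G.inc v e ∧ 0 < G.inc v e') → c e ≠ c e'

/-- An isomorphism of multigraphs: bijections on vertices and edges preserving
incidence (the two endpoints of an edge may be matched in either order). -/
structure Iso (G H : Multigraph) where
  φ : G.V ≃ H.V
  ε : G.E ≃ H.E
  ends : ∀ e : G.E,
    (φ (G.fst e) = H.fst (ε e) ∧ φ (G.snd e) = H.snd (ε e)) ∨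
    (φ (G.fst e) = H.snd (ε e) ∧ φ (G.snd e) = H.fst (ε e))

/-- Edge-transitivity: any edge can be carried to any other by an automorphism. -/
def EdgeTransitive (K : Multigraph) : Prop :=
  ∀ e₁ e₂ : K.E, ∃ σ : Iso K K, σ.ε e₁ = e₂

/-- Adjacency of vertices. -/
def Adj (G : Multigraph) (u v : G.V) : Prop :=
  ∃ e : G.E, (G.fst e = u ∧ G.snd e = v) ∨ (G.fst e = v ∧ G.snd e = u)

/-- Deleting an edge. -/
def deleteEdge (G : Multigraph) (e : G.E) : Multigraph where
  V := G.V
  E := {e' : G.E // e' ≠ e}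
  fst := fun e' => G.fst e'.1
  snd := fun e' => G.snd e'.1

/-- Contracting an edge `e`: its two endpoints are identified (the endpoint `snd e`
is merged into `fst e`), the loop arising from `e` is deleted, all other edges kept. -/
def contract (G : Multigraph) (e : G.E) : Multigraph where
  V := G.V
  E := {e' : G.E // e' ≠ e}
  fst := fun e' => if G.fst e'.1 = G.snd e then G.fst e else G.fst e'.1
  snd := fun e' => if G.snd e'.1 = G.snd e then G.fst e else G.snd e'.1

/-- The 2-join of `G₁` and `G₂` along edges `e₁`, `e₂`: delete `e₁` and `e₂` and
add two new edges `x₁x₂` (coded `Sum.inr false`) and `y₁y₂` (coded `Sum.inr true`),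
where `xᵢ = fst eᵢ` and `yᵢ = snd eᵢ`. -/
def twoJoin (G₁ G₂ : Multigraph) (e₁ : G₁.E) (e₂ : G₂.E) : Multigraph where
  V := G₁.V ⊕ G₂.V
  E := ({a : G₁.E // a ≠ e₁} ⊕ {b : G₂.E // b ≠ e₂}) ⊕ Bool
  fst := fun e => match e with
    | .inl (.inl a) => .inl (G₁.fst a.1)
    | .inl (.inr b) => .inr (G₂.fst b.1)
    | .inr false => .inl (G₁.fst e₁)
    | .inr true => .inl (G₁.snd e₁)
  snd := fun e => match e with
    | .inl (.inl a) => .inl (G₁.snd a.1)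
    | .inl (.inr b) => .inr (G₂.snd b.1)
    | .inr false => .inr (G₂.fst e₂)
    | .inr true => .inr (G₂.snd e₂)

/-- The natural mapping `E(G₁) → E(G₁ ≡₂ G₂)`: identity on `E(G₁) \ {e₁}`,
and `e₁` goes to the new edge `x₁x₂`. -/
def twoJoinMapL (G₁ G₂ : Multigraph) (e₁ : G₁.E) (e₂ : G₂.E) :
    G₁.E → (twoJoin G₁ G₂ e₁ e₂).E :=
  fun a => if h : a = e₁ then .inr false else .inl (.inl ⟨a, h⟩)

/-- The natural mapping `E(G₂) → E(G₁ ≡₂ G₂)`: identity on `E(G₂) \ {e₂}`,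
and `e₂` goes to the new edge `x₁x₂`. -/
def twoJoinMapR (G₁ G₂ : Multigraph) (e₁ : G₁.E) (e₂ : G₂.E) :
    G₂.E → (twoJoin G₁ G₂ e₁ e₂).E :=
  fun b => if h : b = e₂ then .inr false else .inl (.inr ⟨b, h⟩)

lemma ne_of_inc_eq_zero (G : Multigraph) {u : G.V} {e : G.E} (h : G.inc u e = 0) :
    G.fst e ≠ u ∧ G.snd e ≠ u := by
  unfold inc at h
  constructor <;> intro he <;> simp [he] at h

/-- The endpoint of `e` other than `u`. -/
def otherEnd (G : Multigraph) (u : G.V) (e : G.E) : G.V :=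
  if G.fst e = u then G.snd e else G.fst e

lemma otherEnd_ne (G : Multigraph) {u : G.V} {e : G.E} (h : G.inc u e = 1) :
    G.otherEnd u e ≠ u := by
  unfold inc at h
  unfold otherEnd
  split_ifs with hf
  · intro hs; rw [hf, hs] at h; simp at h
  · exact hf

/-- The 3-join of `G₁` and `G₂`: the degree-3 vertices `u₁`, `u₂` are deleted
(`aᵢ j`, `j = 0,1,2`, are the three edges at `uᵢ`, none of them a loop, and all other
edges avoid `uᵢ`), and three new matching edges (coded `Sum.inr j`) are added, the
`j`-th joining the other endpoint of `a₁ j` to the other endpoint of `a₂ j`. -/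
def threeJoin (G₁ G₂ : Multigraph) (u₁ : G₁.V) (u₂ : G₂.V)
    (a₁ : Fin 3 → G₁.E) (a₂ : Fin 3 → G₂.E)
    (h₁ : ∀ j, G₁.inc u₁ (a₁ j) = 1) (h₂ : ∀ j, G₂.inc u₂ (a₂ j) = 1)
    (hz₁ : ∀ e, (∀ j, e ≠ a₁ j) → G₁.inc u₁ e = 0)
    (hz₂ : ∀ e, (∀ j, e ≠ a₂ j) → G₂.inc u₂ e = 0) : Multigraph where
  V := {v : G₁.V // v ≠ u₁} ⊕ {v : G₂.V // v ≠ u₂}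
  E := ({e : G₁.E // ∀ j, e ≠ a₁ j} ⊕ {e : G₂.E // ∀ j, e ≠ a₂ j}) ⊕ Fin 3
  fst := fun e => match e with
    | .inl (.inl a) => .inl ⟨G₁.fst a.1, (ne_of_inc_eq_zero G₁ (hz₁ a.1 a.2)).1⟩
    | .inl (.inr b) => .inr ⟨G₂.fst b.1, (ne_of_inc_eq_zero G₂ (hz₂ b.1 b.2)).1⟩
    | .inr j => .inl ⟨G₁.otherEnd u₁ (a₁ j), otherEnd_ne G₁ (h₁ j)⟩
  snd := fun e => match e with
    | .inl (.inl a) => .inl ⟨G₁.snd a.1, (ne_of_inc_eq_zero G₁ (hz₁ a.1 a.2)).2⟩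
    | .inl (.inr b) => .inr ⟨G₂.snd b.1, (ne_of_inc_eq_zero G₂ (hz₂ b.1 b.2)).2⟩
    | .inr j => .inr ⟨G₂.otherEnd u₂ (a₂ j), otherEnd_ne G₂ (h₂ j)⟩

/-- The natural mapping `E(G₁) → E(G₁ ≡ G₂)`: identity on edges not incident with
`u₁`, and the edge `a₁ j` at `u₁` goes to the `j`-th added matching edge. -/
noncomputable def threeJoinMapL (G₁ G₂ : Multigraph) (u₁ : G₁.V) (u₂ : G₂.V)
    (a₁ : Fin 3 → G₁.E) (a₂ : Fin 3 → G₂.E)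
    (h₁ : ∀ j, G₁.inc u₁ (a₁ j) = 1) (h₂ : ∀ j, G₂.inc u₂ (a₂ j) = 1)
    (hz₁ : ∀ e, (∀ j, e ≠ a₁ j) → G₁.inc u₁ e = 0)
    (hz₂ : ∀ e, (∀ j, e ≠ a₂ j) → G₂.inc u₂ e = 0) :
    G₁.E → (threeJoin G₁ G₂ u₁ u₂ a₁ a₂ h₁ h₂ hz₁ hz₂).E :=
  fun e => if h : ∀ j, e ≠ a₁ j then .inl (.inl ⟨e, h⟩)
    else .inr (Classical.choose (by push_neg at h; exact h))

/-- The natural mapping `E(G₂) → E(G₁ ≡ G₂)`. -/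
noncomputable def threeJoinMapR (G₁ G₂ : Multigraph) (u₁ : G₁.V) (u₂ : G₂.V)
    (a₁ : Fin 3 → G₁.E) (a₂ : Fin 3 → G₂.E)
    (h₁ : ∀ j, G₁.inc u₁ (a₁ j) = 1) (h₂ : ∀ j, G₂.inc u₂ (a₂ j) = 1)
    (hz₁ : ∀ e, (∀ j, e ≠ a₁ j) → G₁.inc u₁ e = 0)
    (hz₂ : ∀ e, (∀ j, e ≠ a₂ j) → G₂.inc u₂ e = 0) :
    G₂.E → (threeJoin G₁ G₂ u₁ u₂ a₁ a₂ h₁ h₂ hz₁ hz₂).E :=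
  fun e => if h : ∀ j, e ≠ a₂ j then .inl (.inr ⟨e, h⟩)
    else .inr (Classical.choose (by push_neg at h; exact h))

/-- The set of edges of `H` to which an odd number of edges of `C ⊆ E(G)` map. -/
def oddImage (G H : Multigraph) (f : G.E → H.E) (C : Finset G.E) : Finset H.E :=
  Finset.univ.filter (fun e' => Odd ((C.filter (fun e => f e = e')).card))

end Multigraph

/-!
The two new edges `x₁x₂` and `y₁y₂` form the cut between the `G₁`-side and the `G₂`-side of
`G₁ ≡₂ G₂`, so every cycle of the 2-join contains both of them or neither. Consequently an edge set
of the 2-join is a cycle exactly when it contains both or neither new edge and its traces on `G₁`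
and on `G₂`, with `x₁x₂` standing for `e₁` and for `e₂`, are cycles. Composing with the natural
edge maps `E(Gᵢ) → E(G₁ ≡₂ G₂)` gives one direction. For the other, an automorphism of `K` moves
`g₂ e₂` onto `g₁ e₁`, after which `g₁` and `g₂` glue to a map on the 2-join sending both new
edges to `g₁ e₁`.
-/

namespace Multigraph

open Finset

section CycleContinuous

variable {G H K : Multigraph}

lemma mem_preim {α β : Type} [Fintype α] [DecidableEq β] {f : α → β} {C : Finset β} {a : α} :
    a ∈ preim f C ↔ f a ∈ C := by
  simp [preim]

lemma preim_comp {α β γ : Type} [Fintype α] [Fintype β] [DecidableEq β] [DecidableEq γ]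
    (g : β → γ) (f : α → β) (C : Finset γ) : preim (g ∘ f) C = preim f (preim g C) := by
  ext
  simp [mem_preim]

lemma CycleContinuous.comp {f : G.E → H.E} {g : H.E → K.E}
    (hg : CycleContinuous H K g) (hf : CycleContinuous G H f) :
    CycleContinuous G K (g ∘ f) := fun C hC => by
  rw [preim_comp]
  exact hf _ (hg C hC)

lemma Iso.inc_map (σ : Iso G H) (v : G.V) (e : G.E) :
    H.inc (σ.φ v) (σ.ε e) = G.inc v e := by
  unfold inc
  rcases σ.ends e with ⟨h₁, h₂⟩ | ⟨h₁, h₂⟩ <;>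
    simp only [← h₁, ← h₂, Equiv.apply_eq_iff_eq, add_comm]

lemma Iso.cycleContinuous (σ : Iso G H) : CycleContinuous G H σ.ε := fun C hC v => by
  rw [sum_equiv σ.ε (t := C) (g := H.inc (σ.φ v)) (fun _ => mem_preim)
    (fun e _ => (σ.inc_map v e).symm)]
  exact hC (σ.φ v)

end CycleContinuous

lemma IsCycle.even_card_inter_cutOf {G : Multigraph} {C : Finset G.E} (hC : G.IsCycle C)
    (U : Finset G.V) : Even #(C ∩ G.cutOf U) := by
  have hends : ∀ e, ∑ v ∈ U, G.inc v e =
      (if G.fst e ∈ U then 1 else 0) + (if G.snd e ∈ U then 1 else 0) := by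
    simp [inc, sum_add_distrib, sum_ite_eq]
  have hsum : Even (∑ e ∈ C, ∑ v ∈ U, G.inc v e) := by
    rw [sum_comm]
    exact even_sum _ fun v _ => hC v
  rw [even_sum_iff_even_card_odd] at hsum
  convert hsum using 3
  ext e
  simp only [mem_inter, cutOf, mem_filter, mem_univ, true_and, hends]
  split_ifs <;> simp_all

lemma IsCycle.even_card_filter_ne {G : Multigraph} {C : Finset G.E} (hC : G.IsCycle C)
    (s : G.V → Bool) : Even #{e ∈ C | s (G.fst e) ≠ s (G.snd e)} := by
  convert hC.even_card_inter_cutOf {v | s v} using 2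
  ext e
  simp only [mem_filter, mem_inter, cutOf, mem_univ, true_and]
  cases s (G.fst e) <;> cases s (G.snd e) <;> simp

section TwoJoin

variable {G₁ G₂ : Multigraph} {e₁ : G₁.E} {e₂ : G₂.E}

-- Naming the new edges fixes their type to `(twoJoin G₁ G₂ e₁ e₂).E`: a bare `.inr b` is
-- elaborated at the underlying sum type, and `rw`/`simp` then fail to match it.
def twoJoinEdge (b : Bool) : (twoJoin G₁ G₂ e₁ e₂).E := .inr b

lemma twoJoinMapL_self : twoJoinMapL G₁ G₂ e₁ e₂ e₁ = twoJoinEdge false := dif_pos rfl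

lemma twoJoinMapL_val (a : {a // a ≠ e₁}) : twoJoinMapL G₁ G₂ e₁ e₂ a = .inl (.inl a) :=
  dif_neg a.2

lemma twoJoinMapR_self : twoJoinMapR G₁ G₂ e₁ e₂ e₂ = twoJoinEdge false := dif_pos rfl

lemma twoJoinMapR_val (b : {b // b ≠ e₂}) : twoJoinMapR G₁ G₂ e₁ e₂ b = .inl (.inr b) :=
  dif_neg b.2

lemma sum_twoJoin {M : Type} [AddCommMonoid M] (F : (twoJoin G₁ G₂ e₁ e₂).E → M) :
    ∑ e, F e = ∑ a : {a // a ≠ e₁}, F (twoJoinMapL G₁ G₂ e₁ e₂ a) +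
      ∑ b : {b // b ≠ e₂}, F (twoJoinMapR G₁ G₂ e₁ e₂ b) +
      (F (twoJoinEdge false) + F (twoJoinEdge true)) := by
  simp only [twoJoinMapL_val, twoJoinMapR_val]
  exact (Fintype.sum_sum_type F).trans
    (by rw [Fintype.sum_sum_type, Fintype.sum_bool, add_comm (F _)]; rfl)

lemma twoJoin_isLeft_fst_ne_isLeft_snd_iff (e : (twoJoin G₁ G₂ e₁ e₂).E) :
    ((twoJoin G₁ G₂ e₁ e₂).fst e).isLeft ≠ ((twoJoin G₁ G₂ e₁ e₂).snd e).isLeft ↔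
      e = twoJoinEdge false ∨ e = twoJoinEdge true := by
  rcases e with (a | b) | (_ | _) <;> simp [twoJoin, twoJoinEdge]

lemma IsCycle.twoJoinEdge_mem_iff {S : Finset (twoJoin G₁ G₂ e₁ e₂).E}
    (hS : (twoJoin G₁ G₂ e₁ e₂).IsCycle S) : twoJoinEdge false ∈ S ↔ twoJoinEdge true ∈ S := by
  have h := hS.even_card_filter_ne Sum.isLeft
  simp only [twoJoin_isLeft_fst_ne_isLeft_snd_iff, filter_or, filter_eq'] at h
  by_cases hx : twoJoinEdge false ∈ S <;> by_cases hy : twoJoinEdge true ∈ S <;> simp_all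

variable (v : G₁.V) (w : G₂.V)

lemma twoJoin_inc_inl_twoJoinMapL (a : {a // a ≠ e₁}) :
    (twoJoin G₁ G₂ e₁ e₂).inc (.inl v) (twoJoinMapL G₁ G₂ e₁ e₂ a) = G₁.inc v a := by
  rw [twoJoinMapL_val]
  simp [inc, twoJoin]

lemma twoJoin_inc_inl_twoJoinMapR (b : {b // b ≠ e₂}) :
    (twoJoin G₁ G₂ e₁ e₂).inc (.inl v) (twoJoinMapR G₁ G₂ e₁ e₂ b) = 0 := by
  rw [twoJoinMapR_val]
  simp [inc, twoJoin]

lemma twoJoin_inc_inr_twoJoinMapL (a : {a // a ≠ e₁}) :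
    (twoJoin G₁ G₂ e₁ e₂).inc (.inr w) (twoJoinMapL G₁ G₂ e₁ e₂ a) = 0 := by
  rw [twoJoinMapL_val]
  simp [inc, twoJoin]

lemma twoJoin_inc_inr_twoJoinMapR (b : {b // b ≠ e₂}) :
    (twoJoin G₁ G₂ e₁ e₂).inc (.inr w) (twoJoinMapR G₁ G₂ e₁ e₂ b) = G₂.inc w b := by
  rw [twoJoinMapR_val]
  simp [inc, twoJoin]

lemma twoJoin_inc_inl_twoJoinEdge (b : Bool) :
    (twoJoin G₁ G₂ e₁ e₂).inc (.inl v) (twoJoinEdge b) =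
      if (bif b then G₁.snd e₁ else G₁.fst e₁) = v then 1 else 0 := by
  cases b <;> simp [inc, twoJoin, twoJoinEdge]

lemma twoJoin_inc_inr_twoJoinEdge (b : Bool) :
    (twoJoin G₁ G₂ e₁ e₂).inc (.inr w) (twoJoinEdge b) =
      if (bif b then G₂.snd e₂ else G₂.fst e₂) = w then 1 else 0 := by
  cases b <;> simp [inc, twoJoin, twoJoinEdge]

variable {S : Finset (twoJoin G₁ G₂ e₁ e₂).E}

lemma sum_twoJoin_inc_inl (hS : twoJoinEdge false ∈ S ↔ twoJoinEdge true ∈ S) :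
    ∑ e ∈ S, (twoJoin G₁ G₂ e₁ e₂).inc (.inl v) e =
      ∑ a ∈ preim (twoJoinMapL G₁ G₂ e₁ e₂) S, G₁.inc v a := by
  rw [← sum_ite_mem_eq, sum_twoJoin, preim, sum_filter, Fintype.sum_eq_add_sum_subtype_ne _ e₁]
  simp only [← hS, twoJoinMapL_self, twoJoin_inc_inl_twoJoinMapL, twoJoin_inc_inl_twoJoinMapR,
    twoJoin_inc_inl_twoJoinEdge, cond_false, cond_true, ite_self, sum_const_zero, add_zero]
  rw [add_comm, ite_add_ite, add_zero]
  rfl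

lemma sum_twoJoin_inc_inr (hS : twoJoinEdge false ∈ S ↔ twoJoinEdge true ∈ S) :
    ∑ e ∈ S, (twoJoin G₁ G₂ e₁ e₂).inc (.inr w) e =
      ∑ b ∈ preim (twoJoinMapR G₁ G₂ e₁ e₂) S, G₂.inc w b := by
  rw [← sum_ite_mem_eq, sum_twoJoin, preim, sum_filter, Fintype.sum_eq_add_sum_subtype_ne _ e₂]
  simp only [← hS, twoJoinMapR_self, twoJoin_inc_inr_twoJoinMapL, twoJoin_inc_inr_twoJoinMapR,
    twoJoin_inc_inr_twoJoinEdge, cond_false, cond_true, ite_self, sum_const_zero, zero_add]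
  rw [add_comm, ite_add_ite, add_zero]
  rfl

lemma isCycle_twoJoin_iff :
    (twoJoin G₁ G₂ e₁ e₂).IsCycle S ↔ G₁.IsCycle (preim (twoJoinMapL G₁ G₂ e₁ e₂) S) ∧
      G₂.IsCycle (preim (twoJoinMapR G₁ G₂ e₁ e₂) S) ∧
      (twoJoinEdge false ∈ S ↔ twoJoinEdge true ∈ S) := by
  constructor
  · intro hS
    have hxy := hS.twoJoinEdge_mem_iff
    refine ⟨fun v => ?_, fun w => ?_, hxy⟩
    · rw [← sum_twoJoin_inc_inl v hxy]
      exact hS (.inl v)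
    · rw [← sum_twoJoin_inc_inr w hxy]
      exact hS (.inr w)
  · rintro ⟨h₁, h₂, hxy⟩ (v | w)
    · rw [sum_twoJoin_inc_inl v hxy]
      exact h₁ v
    · rw [sum_twoJoin_inc_inr w hxy]
      exact h₂ w

lemma cycleContinuous_twoJoinMapL :
    CycleContinuous G₁ (twoJoin G₁ G₂ e₁ e₂) (twoJoinMapL G₁ G₂ e₁ e₂) :=
  fun _ hS => (isCycle_twoJoin_iff.1 hS).1

lemma cycleContinuous_twoJoinMapR :
    CycleContinuous G₂ (twoJoin G₁ G₂ e₁ e₂) (twoJoinMapR G₁ G₂ e₁ e₂) :=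
  fun _ hS => (isCycle_twoJoin_iff.1 hS).2.1

variable {K : Multigraph}

def twoJoinLift (e₁ : G₁.E) (e₂ : G₂.E) (g₁ : G₁.E → K.E) (g₂ : G₂.E → K.E) :
    (twoJoin G₁ G₂ e₁ e₂).E → K.E :=
  Sum.elim (Sum.elim (g₁ ∘ Subtype.val) (g₂ ∘ Subtype.val)) fun _ => g₁ e₁

variable {g₁ : G₁.E → K.E} {g₂ : G₂.E → K.E}

lemma twoJoinLift_twoJoinEdge (b : Bool) : twoJoinLift e₁ e₂ g₁ g₂ (twoJoinEdge b) = g₁ e₁ :=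
  rfl

lemma twoJoinLift_comp_twoJoinMapL : twoJoinLift e₁ e₂ g₁ g₂ ∘ twoJoinMapL G₁ G₂ e₁ e₂ = g₁ := by
  funext a
  rcases eq_or_ne a e₁ with rfl | ha
  · rw [Function.comp_apply, twoJoinMapL_self, twoJoinLift_twoJoinEdge]
  · rw [Function.comp_apply, twoJoinMapL_val ⟨a, ha⟩]
    rfl

lemma twoJoinLift_comp_twoJoinMapR (h : g₂ e₂ = g₁ e₁) :
    twoJoinLift e₁ e₂ g₁ g₂ ∘ twoJoinMapR G₁ G₂ e₁ e₂ = g₂ := by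
  funext b
  rcases eq_or_ne b e₂ with rfl | hb
  · rw [Function.comp_apply, twoJoinMapR_self, twoJoinLift_twoJoinEdge, h]
  · rw [Function.comp_apply, twoJoinMapR_val ⟨b, hb⟩]
    rfl

lemma cycleContinuous_twoJoinLift (hg₁ : CycleContinuous G₁ K g₁)
    (hg₂ : CycleContinuous G₂ K g₂) (h : g₂ e₂ = g₁ e₁) :
    CycleContinuous (twoJoin G₁ G₂ e₁ e₂) K (twoJoinLift e₁ e₂ g₁ g₂) := fun C hC => by
  refine isCycle_twoJoin_iff.2 ⟨?_, ?_, ?_⟩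
  · rw [← preim_comp, twoJoinLift_comp_twoJoinMapL]
    exact hg₁ C hC
  · rw [← preim_comp, twoJoinLift_comp_twoJoinMapR h]
    exact hg₂ C hC
  · simp only [mem_preim, twoJoinLift_twoJoinEdge]

end TwoJoin

end Multigraph

open Multigraph in
/-- for an edge-transitive `K`, the 2-join maps cycle-continuously to `K`
iff both factors do. -/
theorem twoJoin_proj (G₁ G₂ K : Multigraph) (e₁ : G₁.E) (e₂ : G₂.E)
    (hK : EdgeTransitive K) :
    (∃ g : (twoJoin G₁ G₂ e₁ e₂).E → K.E, CycleContinuous (twoJoin G₁ G₂ e₁ e₂) K g) ↔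
      (∃ g₁ : G₁.E → K.E, CycleContinuous G₁ K g₁) ∧
      (∃ g₂ : G₂.E → K.E, CycleContinuous G₂ K g₂) := by
  constructor
  · rintro ⟨g, hg⟩
    exact ⟨⟨_, hg.comp cycleContinuous_twoJoinMapL⟩, ⟨_, hg.comp cycleContinuous_twoJoinMapR⟩⟩
  · rintro ⟨⟨g₁, hg₁⟩, ⟨g₂, hg₂⟩⟩
    obtain ⟨σ, hσ⟩ := hK (g₂ e₂) (g₁ e₁)
    exact ⟨_, cycleContinuous_twoJoinLift hg₁ (σ.cycleContinuous.comp hg₂) hσ⟩
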